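/- arXiv:1904.04191 — 2 statements merged into one kernel-verified Lean document; each statement's English description precedes it below -/
import Mathlib

section
/- Fix constants K₁ > 0, K₂ < 2, C₁ > 0, λ > 0, U > 0, μ > 0, m ≥ 2, ε > 0. Define N = max( (1/2)((C₁λ + ε)/((K₁/m)U) + K₂), (C₁λ + ε)/((K₁/m)(2-K₂)μ) - U/μ + 1 ). Then for all real ȳ ≥ N and all η ∈ [0, 1 - 1/ȳ] (with ȳ ≥ 1), letting y = ηȳ and R = U + yμ, we have C₁λ - (K₁/m)·R·(2(ȳ - y) - K₂) ≤ -ε. -/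
theorem stmt2 (K₁ K₂ C₁ lam U μ ε : ℝ) (m : ℕ)
    (hK₁ : 0 < K₁) (hK₂ : K₂ < 2) (hC₁ : 0 < C₁) (hlam : 0 < lam)
    (hU : 0 < U) (hμ : 0 < μ) (hm : 2 ≤ m) (hε : 0 < ε)
    (N : ℝ)
    (hN : N = max ((1/2)*((C₁*lam + ε)/((K₁/m)*U) + K₂))
        ((C₁*lam + ε)/((K₁/m)*(2-K₂)*μ) - U/μ + 1)) :
    ∀ ybar : ℝ, N ≤ ybar → 1 ≤ ybar →
      ∀ η ∈ Set.Icc (0:ℝ) (1 - 1/ybar),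
        C₁*lam - (K₁/m) * (U + (η*ybar)*μ) * (2*(ybar - η*ybar) - K₂) ≤ -ε := by
  intro ybar hNy h1 η hη
  obtain ⟨hη0, hη1⟩ := hη
  have hm' : (0:ℝ) < m := by positivity
  have hc : (0:ℝ) < K₁/m := by positivity
  set c : ℝ := K₁/m with hcdef
  set A : ℝ := C₁*lam + ε with hA
  have hK2 : (0:ℝ) < 2 - K₂ := by linarith
  have hyb : (0:ℝ) < ybar := by linarith
  -- endpoint bounds
  have hN1 : (1/2)*(A/(c*U) + K₂) ≤ ybar := le_trans (le_trans (le_max_left _ _) hN.ge) hNy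
  have hN2 : A/(c*(2-K₂)*μ) - U/μ + 1 ≤ ybar := le_trans (le_trans (le_max_right _ _) hN.ge) hNy
  have hcU : (0:ℝ) < c*U := by positivity
  have E0 : A ≤ c*U*(2*ybar - K₂) := by
    have h := (div_le_iff₀ hcU).mp (by linarith : A/(c*U) ≤ 2*ybar - K₂)
    linarith [h]
  have hden : (0:ℝ) < c*(2-K₂)*μ := by positivity
  have E1 : A ≤ c*(2-K₂)*(U + μ*(ybar-1)) := by
    have h : A/(c*(2-K₂)*μ) ≤ ybar - 1 + U/μ := by linarith
    have h2 := (div_le_iff₀ hden).mp h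
    have : (ybar - 1 + U/μ) * (c*(2-K₂)*μ) = c*(2-K₂)*(U + μ*(ybar-1)) := by
      field_simp; ring
    linarith [this ▸ h2]
  set y : ℝ := η * ybar with hy
  have hy0 : 0 ≤ y := mul_nonneg hη0 hyb.le
  have hyb1 : y ≤ ybar - 1 := by
    have : η * ybar ≤ (1 - 1/ybar) * ybar :=
      mul_le_mul_of_nonneg_right hη1 hyb.le
    have h2 : (1 - 1/ybar) * ybar = ybar - 1 := by field_simp
    linarith [h2 ▸ this]
  -- concavity argument
  have key : A ≤ c * (U + y*μ) * (2*(ybar - y) - K₂) := by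
    rcases eq_or_lt_of_le (by linarith : (0:ℝ) ≤ ybar - 1) with hb | hb
    · have hy00 : y = 0 := le_antisymm (by linarith) hy0
      rw [hy00]
      nlinarith [E0]
    · have hid : (ybar-1)*(c*(U+y*μ)*(2*(ybar-y)-K₂))
          = (ybar-1-y)*(c*U*(2*ybar-K₂)) + y*(c*(2-K₂)*(U+μ*(ybar-1)))
            + 2*c*μ*y*(ybar-1-y)*(ybar-1) := by ring
      have h1' : (ybar-1)*A ≤ (ybar-1)*(c*(U+y*μ)*(2*(ybar-y)-K₂)) := by
        nlinarith [mul_nonneg (by linarith : (0:ℝ) ≤ ybar-1-y) (by linarith : (0:ℝ) ≤ c*U*(2*ybar-K₂) - A),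
          mul_nonneg hy0 (by linarith : (0:ℝ) ≤ c*(2-K₂)*(U+μ*(ybar-1)) - A),
          mul_nonneg (mul_nonneg (mul_nonneg (by positivity : (0:ℝ) ≤ 2*c*μ) hy0) (by linarith : (0:ℝ) ≤ ybar-1-y)) hb.le]
      exact le_of_mul_le_mul_left (by linarith [h1']) hb
  linarith [key]
end

section
/- Let y : Fin m → ℕ with m ≥ 2, ȳ = maxᵢ y i ≥ 1, and let j be an index with y j < ȳ. Define y' i = y i - [i ≠ j] (assuming y i ≥ 1 for all i ≠ j). Then maxᵢ y' i = ȳ - 1 and ∑ᵢ ((ȳ-1) - y' i)² - ∑ᵢ (ȳ - y i)² = (ȳ - y j - 1)² - (ȳ - y j)² ≤ -1. -/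
theorem stmt7 (m : ℕ) (hm : 2 ≤ m) (y : Fin m → ℕ) (j : Fin m)
    (ybar : ℕ) (hybar : ybar = Finset.univ.sup y) (hybar1 : 1 ≤ ybar)
    (hj : y j < ybar)
    (hpos : ∀ i, i ≠ j → 1 ≤ y i)
    (y' : Fin m → ℕ) (hy' : ∀ i, y' i = y i - (if i ≠ j then 1 else 0)) :
    Finset.univ.sup y' = ybar - 1 ∧
    (∑ i, (((ybar:ℤ)-1) - y' i)^2) - (∑ i, ((ybar:ℤ) - y i)^2)
      = ((ybar:ℤ) - y j - 1)^2 - ((ybar:ℤ) - y j)^2 ∧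
    ((ybar:ℤ) - y j - 1)^2 - ((ybar:ℤ) - y j)^2 ≤ -1 := by
  have hne : (Finset.univ : Finset (Fin m)).Nonempty := by
    exact ⟨⟨0, by omega⟩, Finset.mem_univ _⟩
  have hle : ∀ i, y i ≤ ybar := by
    intro i; rw [hybar]; exact Finset.le_sup (Finset.mem_univ i)
  obtain ⟨imax, -, hmax⟩ := Finset.exists_mem_eq_sup _ hne y
  have himax : y imax = ybar := by rw [hybar, hmax]
  have himj : imax ≠ j := by
    intro h; rw [h] at himax; omega
  constructor
  · apply le_antisymm
    · apply Finset.sup_le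
      intro i _
      rw [hy' i]
      by_cases h : i = j
      · simp [h]; omega
      · simp [h]; have := hpos i h; have := hle i; omega
    · have : y' imax = ybar - 1 := by rw [hy' imax]; simp [himj]; omega
      rw [← this]; exact Finset.le_sup (Finset.mem_univ imax)
  constructor
  · have key : ∀ i, (((ybar:ℤ)-1) - y' i)^2 - ((ybar:ℤ) - y i)^2
        = if i = j then ((ybar:ℤ) - y j - 1)^2 - ((ybar:ℤ) - y j)^2 else 0 := by
      intro i
      by_cases h : i = j
      · subst h; simp [hy' i]; ring_nf
      · simp [h]
        have h1 : 1 ≤ y i := hpos i h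
        have : (y' i : ℤ) = (y i : ℤ) - 1 := by rw [hy' i]; simp [h]; omega
        rw [this]; ring
    calc (∑ i, (((ybar:ℤ)-1) - y' i)^2) - (∑ i, ((ybar:ℤ) - y i)^2)
        = ∑ i, ((((ybar:ℤ)-1) - y' i)^2 - ((ybar:ℤ) - y i)^2) := by
          rw [Finset.sum_sub_distrib]
      _ = ∑ i, (if i = j then ((ybar:ℤ) - y j - 1)^2 - ((ybar:ℤ) - y j)^2 else 0) := by
          exact Finset.sum_congr rfl fun i _ => key i
      _ = ((ybar:ℤ) - y j - 1)^2 - ((ybar:ℤ) - y j)^2 := by simp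
  · have : (y j : ℤ) + 1 ≤ (ybar:ℤ) := by exact_mod_cast hj
    nlinarith
end
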